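/- With the sequence U_0 = ↑{m_final} ∩-guarded by I (U_0 = ↑{m_final} if m_final ∈ I else ∅) and U_{k+1} = ↑(pre(U_k) ∩ I) ∪ U_k, where I is a downward-closed invariant: every U_k is contained in pre*(↑{m_final}), the set of markings from which some marking covering m_final is reachable. -/
import Mathlib


open Classical

/-- One step of transition `t`: `F p t` tokens consumed from `p`, `G t p` produced. -/
def Step {P T : Type*} (F : P → T → ℕ) (G : T → P → ℕ) (t : T) (m m' : P → ℕ) : Prop :=
  ∀ p, F p t ≤ m p ∧ m' p = m p - F p t + G t p

/-- One-step relation (union over transitions). -/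
def Step1 {P T : Type*} (F : P → T → ℕ) (G : T → P → ℕ) (m m' : P → ℕ) : Prop :=
  ∃ t, Step F G t m m'

/-- Many-step reachability. -/
def Reach {P T : Type*} (F : P → T → ℕ) (G : T → P → ℕ) : (P → ℕ) → (P → ℕ) → Prop :=
  Relation.ReflTransGen (Step1 F G)

/-- Upward closure. -/
def up {P : Type*} (S : Set (P → ℕ)) : Set (P → ℕ) := {u | ∃ m ∈ S, m ≤ u}

/-- Downward closure. -/
def down {P : Type*} (S : Set (P → ℕ)) : Set (P → ℕ) := {d | ∃ m ∈ S, d ≤ m}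

def UpwardClosed {P : Type*} (S : Set (P → ℕ)) : Prop := ∀ ⦃m m' : P → ℕ⦄, m ∈ S → m ≤ m' → m' ∈ S

def DownwardClosed {P : Type*} (S : Set (P → ℕ)) : Prop := ∀ ⦃m m' : P → ℕ⦄, m ∈ S → m' ≤ m → m' ∈ S

/-- One-step predecessors of `S`. -/
def pre {P T : Type*} (F : P → T → ℕ) (G : T → P → ℕ) (S : Set (P → ℕ)) : Set (P → ℕ) :=
  {m | ∃ m' ∈ S, Step1 F G m m'}

/-- Predecessors via transition `t`. -/
def preT {P T : Type*} (F : P → T → ℕ) (G : T → P → ℕ) (t : T) (S : Set (P → ℕ)) : Set (P → ℕ) :=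
  {m | ∃ m' ∈ S, Step F G t m m'}

/-- Many-step predecessors of `S`. -/
def preStar {P T : Type*} (F : P → T → ℕ) (G : T → P → ℕ) (S : Set (P → ℕ)) : Set (P → ℕ) :=
  {m | ∃ m' ∈ S, Reach F G m m'}

/-- The coverability set. -/
def Cov {P T : Type*} (F : P → T → ℕ) (G : T → P → ℕ) (minit : P → ℕ) : Set (P → ℕ) :=
  down {m | Reach F G minit m}

/-- Pruned backward iteration sequence. -/
noncomputable def Useq {P T : Type*} (F : P → T → ℕ) (G : T → P → ℕ)
    (I : Set (P → ℕ)) (mfin : P → ℕ) : ℕ → Set (P → ℕ)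
  | 0 => if mfin ∈ I then up {mfin} else ∅
  | k + 1 => up (pre F G (Useq F G I mfin k) ∩ I) ∪ Useq F G I mfin k


lemma step_mono {P T : Type*} (F : P → T → ℕ) (G : T → P → ℕ) {t : T} {m m' u : P → ℕ}
    (h : Step F G t m m') (hmu : m ≤ u) :
    ∃ u', Step F G t u u' ∧ m' ≤ u' := by
  refine ⟨fun p => u p - F p t + G t p, fun p => ⟨le_trans (h p).1 (hmu p), rfl⟩, fun p => ?_⟩
  rw [(h p).2]
  exact Nat.add_le_add_right (Nat.sub_le_sub_right (hmu p) _) _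

lemma reach_mono {P T : Type*} (F : P → T → ℕ) (G : T → P → ℕ) {m m' u : P → ℕ}
    (h : Reach F G m m') (hmu : m ≤ u) :
    ∃ u', Reach F G u u' ∧ m' ≤ u' := by
  induction h with
  | refl => exact ⟨u, Relation.ReflTransGen.refl, hmu⟩
  | tail _ hstep ih =>
    obtain ⟨u', hr, hle⟩ := ih
    obtain ⟨t, hst⟩ := hstep
    obtain ⟨u'', hst', hle'⟩ := step_mono F G hst hle
    exact ⟨u'', hr.tail ⟨t, hst'⟩, hle'⟩

lemma preStar_up {P T : Type*} (F : P → T → ℕ) (G : T → P → ℕ) (S : Set (P → ℕ)) :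
    UpwardClosed (preStar F G (up S)) := by
  rintro m u ⟨m', ⟨w, hw, hwm'⟩, hr⟩ hmu
  obtain ⟨u', hr', hle⟩ := reach_mono F G hr hmu
  exact ⟨u', ⟨w, hw, le_trans hwm' hle⟩, hr'⟩

theorem stmt5 {P T : Type*} (F : P → T → ℕ) (G : T → P → ℕ)
    (minit mfin : P → ℕ) (I : Set (P → ℕ))
    (hInv : {m | Reach F G minit m} ⊆ I) (hDown : DownwardClosed I) :
    ∀ k, Useq F G I mfin k ⊆ preStar F G (up {mfin}) := by
  intro k
  induction k with
  | zero =>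
    intro m hm
    simp only [Useq] at hm
    split at hm
    · obtain ⟨w, hw, hle⟩ := hm
      exact ⟨m, ⟨w, hw, hle⟩, Relation.ReflTransGen.refl⟩
    · exact absurd hm (Set.notMem_empty m)
  | succ k ih =>
    intro m hm
    rcases hm with hm | hm
    · obtain ⟨w, ⟨⟨m', hm', hst⟩, -⟩, hle⟩ := hm
      have : w ∈ preStar F G (up {mfin}) := by
        obtain ⟨z, hz, hr⟩ := ih hm'
        exact ⟨z, hz, Relation.ReflTransGen.head hst hr⟩
      exact preStar_up F G _ this hle
    · exact ih hm
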